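/- arXiv:2207.13253 — 5 statements merged into one kernel-verified Lean document; each statement's English description precedes it below -/
import Mathlib

section
/- (Sensitivity of reverse k-NN labeling.) Let s, k, r be positive integers, let Y be a finite label set, and let records be indexed by a finite set J. Suppose each record j ∈ J determines a set T_j ⊆ Fin s of buckets with |T_j| ≤ k and a label vector y_j ∈ {0,1}^Y with at most r ones, and let A(·) ∈ ℝ^{Fin s × Y} be the aggregate A(l,c) = Σ_{j ∈ J} [l ∈ T_j] · y_j(c). If two inputs (T_j, y_j)_{j∈J} and (T'_j, y'_j)_{j∈J} coincide for all but one index j₀ ∈ J (each satisfying the same constraints), then the ℓ1 distance of the aggregates satisfies Σ_{l,c} |A(l,c) − A'(l,c)| ≤ 2·k·r. -/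
open Finset

lemma aux_bound {Y : Type*} [Fintype Y] {s k r : ℕ} (Tj : Finset (Fin s)) (yj : Y → ℝ)
    (hT : Tj.card ≤ k) (h01 : ∀ c, yj c = 0 ∨ yj c = 1) (hyr : ∑ c : Y, yj c ≤ r) :
    ∑ l : Fin s, ∑ c : Y, |if l ∈ Tj then yj c else 0| ≤ (k : ℝ) * r := by
  have hnn : ∀ c, 0 ≤ yj c := by
    intro c; rcases h01 c with h | h <;> simp [h]
  have : ∀ l : Fin s, ∑ c : Y, |if l ∈ Tj then yj c else 0|
      = if l ∈ Tj then ∑ c : Y, yj c else 0 := by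
    intro l
    by_cases h : l ∈ Tj <;> simp [h, abs_of_nonneg, hnn]
  rw [Finset.sum_congr rfl fun l _ => this l]
  rw [Finset.sum_ite_mem, Finset.univ_inter, Finset.sum_const, nsmul_eq_mul]
  calc (Tj.card : ℝ) * ∑ c : Y, yj c ≤ (k : ℝ) * r := by
        apply mul_le_mul (by exact_mod_cast hT) hyr (Finset.sum_nonneg fun c _ => hnn c)
          (by positivity)

/-- Sensitivity of reverse k-NN labeling: if each record selects at most `k` of the `s`
buckets and contributes a `{0,1}`-label vector with at most `r` ones, then changing the
data of a single record `j₀` changes the aggregated array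
`A(l,c) = Σ_j ⟦l ∈ T_j⟧ · y_j(c)` by at most `2·k·r` in ℓ1 distance. -/
theorem reverse_kNN_sensitivity
    {J : Type*} [Fintype J] {Y : Type*} [Fintype Y]
    (s k r : ℕ) (hs : 0 < s) (hk : 0 < k) (hr : 0 < r)
    (T T' : J → Finset (Fin s)) (y y' : J → Y → ℝ)
    (hTk : ∀ j, (T j).card ≤ k) (hTk' : ∀ j, (T' j).card ≤ k)
    (hy01 : ∀ j c, y j c = 0 ∨ y j c = 1) (hy01' : ∀ j c, y' j c = 0 ∨ y' j c = 1)
    (hyr : ∀ j, ∑ c : Y, y j c ≤ r) (hyr' : ∀ j, ∑ c : Y, y' j c ≤ r)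
    (j₀ : J) (hneighbor : ∀ j : J, j ≠ j₀ → T j = T' j ∧ y j = y' j) :
    ∑ l : Fin s, ∑ c : Y,
        |(∑ j : J, if l ∈ T j then y j c else 0) - (∑ j : J, if l ∈ T' j then y' j c else 0)|
      ≤ 2 * k * r := by
  have key : ∀ (l : Fin s) (c : Y),
      (∑ j : J, if l ∈ T j then y j c else 0) - (∑ j : J, if l ∈ T' j then y' j c else 0)
      = (if l ∈ T j₀ then y j₀ c else 0) - (if l ∈ T' j₀ then y' j₀ c else 0) := by
    intro l c
    rw [← Finset.sum_sub_distrib]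
    apply Fintype.sum_eq_single
    intro j hj
    obtain ⟨h1, h2⟩ := hneighbor j hj
    rw [h1, h2, sub_self]
  calc ∑ l : Fin s, ∑ c : Y,
        |(∑ j : J, if l ∈ T j then y j c else 0) - (∑ j : J, if l ∈ T' j then y' j c else 0)|
      = ∑ l : Fin s, ∑ c : Y,
        |(if l ∈ T j₀ then y j₀ c else 0) - (if l ∈ T' j₀ then y' j₀ c else 0)| := by
        exact Finset.sum_congr rfl fun l _ => Finset.sum_congr rfl fun c _ => by rw [key]
    _ ≤ ∑ l : Fin s, ∑ c : Y,
        (|if l ∈ T j₀ then y j₀ c else 0| + |if l ∈ T' j₀ then y' j₀ c else 0|) := by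
        apply Finset.sum_le_sum; intro l _; apply Finset.sum_le_sum; intro c _
        exact abs_sub _ _
    _ = (∑ l : Fin s, ∑ c : Y, |if l ∈ T j₀ then y j₀ c else 0|)
        + (∑ l : Fin s, ∑ c : Y, |if l ∈ T' j₀ then y' j₀ c else 0|) := by
        rw [← Finset.sum_add_distrib]
        exact Finset.sum_congr rfl fun l _ => Finset.sum_add_distrib
    _ ≤ (k : ℝ) * r + (k : ℝ) * r := by
        gcongr
        · exact aux_bound _ _ (hTk j₀) (hy01 j₀) (hyr j₀)
        · exact aux_bound _ _ (hTk' j₀) (hy01' j₀) (hyr' j₀)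
    _ = 2 * k * r := by ring
end

section
/- (Corollary of Proposition 1 and Remark 1: correctness of the noisy hard label.) Let ε > 0, k, r positive integers, Y a finite nonempty label set, β ∈ (0,1), and α = (2·k·r/ε)·log(|Y|/β). Let a_t : Y → ℝ with true label y* ∈ Y satisfy Gap_t = a_t(y*) − max_{c ≠ y*} a_t(c) ≥ 2α. Let ã_t(c) = a_t(c) + L_c where (L_c)_{c∈Y} are independent Laplace random variables of scale 2·k·r/ε. Then with probability at least 1 − β, y* is the unique maximizer of ã_t, i.e. the estimated hard labeling result equals the true label. -/
open MeasureTheory Real ProbabilityTheory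

/-- The Laplace distribution with scale `b > 0`: the measure on `ℝ` with density
`x ↦ (1/(2b))·exp(−|x|/b)` with respect to Lebesgue measure. -/
noncomputable def laplaceMeasure (b : ℝ) : Measure ℝ :=
  volume.withDensity (fun x => ENNReal.ofReal ((1 / (2 * b)) * Real.exp (-|x| / b)))

/-! If every noise term satisfies `|L c| < α`, where `α = b · log (|Y| / β)` and `b = 2kr/ε`,
then a gap of `2α` cannot be overturned. The two-sided Laplace tail gives
`P (α ≤ |L c|) ≤ exp (-α / b) = β / |Y|`, so a union bound over the `|Y|` labels bounds the
failure probability by `β`. -/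

open Set

lemma laplaceMeasure_Ici {b α : ℝ} (hb : 0 < b) (hα : 0 ≤ α) :
    laplaceMeasure b (Ici α) = ENNReal.ofReal (exp (-α / b) / 2) := by
  have hdens : ∀ x ∈ Ici α,
      (1 / (2 * b)) * exp (-|x| / b) = (1 / (2 * b)) * exp (-b⁻¹ * x) := by
    intro x hx
    rw [abs_of_nonneg (hα.trans hx)]
    ring_nf
  have hint : IntegrableOn (fun x => (1 / (2 * b)) * exp (-b⁻¹ * x)) (Ici α) :=
    (integrableOn_Ici_iff_integrableOn_Ioi).mpr
      ((integrableOn_exp_mul_Ioi (by simpa using hb) α).const_mul _)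
  rw [laplaceMeasure, withDensity_apply _ measurableSet_Ici,
    setLIntegral_congr_fun measurableSet_Ici (fun x hx => by rw [hdens x hx]),
    ← ofReal_integral_eq_lintegral_ofReal hint (ae_of_all _ fun x => by positivity),
    integral_Ici_eq_integral_Ioi, integral_const_mul, integral_exp_mul_Ioi (by simpa using hb)]
  congr 1
  field_simp

lemma laplaceMeasure_Iic_neg (b α : ℝ) :
    laplaceMeasure b (Iic (-α)) = laplaceMeasure b (Ici α) := by
  have hneg : Measure.map Neg.neg (volume : Measure ℝ) = volume :=
    (Measure.measurePreserving_neg volume).map_eq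
  rw [laplaceMeasure, withDensity_apply _ measurableSet_Iic, withDensity_apply _ measurableSet_Ici,
    ← hneg, setLIntegral_map measurableSet_Iic (by fun_prop) measurable_neg]
  simp

lemma laplaceMeasure_abs_ge_le {b α : ℝ} (hb : 0 < b) (hα : 0 ≤ α) :
    laplaceMeasure b {x | α ≤ |x|} ≤ ENNReal.ofReal (exp (-α / b)) := by
  have hsplit : {x : ℝ | α ≤ |x|} = Iic (-α) ∪ Ici α := by
    ext x; simp [le_abs, or_comm, le_neg]
  calc laplaceMeasure b {x | α ≤ |x|}
      ≤ laplaceMeasure b (Iic (-α)) + laplaceMeasure b (Ici α) :=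
        hsplit ▸ measure_union_le _ _
    _ = ENNReal.ofReal (exp (-α / b)) := by
        rw [laplaceMeasure_Iic_neg, laplaceMeasure_Ici hb hα,
          ← ENNReal.ofReal_add (by positivity) (by positivity), add_halves]

lemma measure_abs_ge_le_of_map_eq_laplaceMeasure {Ω : Type*} [MeasurableSpace Ω]
    {P : Measure Ω} {X : Ω → ℝ} (hX : Measurable X) {b α : ℝ}
    (hlaw : P.map X = laplaceMeasure b) (hb : 0 < b) (hα : 0 ≤ α) :
    P {ω | α ≤ |X ω|} ≤ ENNReal.ofReal (exp (-α / b)) := by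
  have hs : MeasurableSet {x : ℝ | α ≤ |x|} := measurableSet_le measurable_const measurable_abs
  calc P {ω | α ≤ |X ω|} = P.map X {x | α ≤ |x|} := (Measure.map_apply hX hs).symm
    _ ≤ _ := hlaw ▸ laplaceMeasure_abs_ge_le hb hα

lemma one_sub_card_mul_le_measure_compl_iUnion {Ω ι : Type*} [MeasurableSpace Ω] [Fintype ι]
    (P : Measure Ω) [IsProbabilityMeasure P] {A : ι → Set Ω} {δ : ENNReal}
    (hA : ∀ i, P (A i) ≤ δ) : 1 - Fintype.card ι * δ ≤ P (⋃ i, A i)ᶜ := by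
  calc 1 - Fintype.card ι * δ ≤ P univ - P (⋃ i, A i) := by
        rw [measure_univ]
        gcongr
        calc P (⋃ i, A i) ≤ ∑ i, P (A i) := measure_iUnion_fintype_le _ _
          _ ≤ ∑ _i : ι, δ := Finset.sum_le_sum fun i _ => hA i
          _ = Fintype.card ι * δ := by simp
    _ ≤ P (⋃ i, A i)ᶜ := compl_eq_univ_sdiff (⋃ i, A i) ▸ le_measure_sdiff

theorem noisy_hard_label_correct_general
    {Y : Type*} [Fintype Y]
    {Ωs : Type*} [MeasurableSpace Ωs] (P : Measure Ωs) [IsProbabilityMeasure P]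
    (ε : ℝ) (hε : 0 < ε) (k r : ℕ) (hk : 0 < k) (hr : 0 < r)
    (β : ℝ) (hβ : β ∈ Set.Ioo (0 : ℝ) 1)
    (a : Y → ℝ) (ystar : Y)
    (hGap : ∀ c : Y, c ≠ ystar →
      2 * ((2 * k * r / ε) * Real.log (Fintype.card Y / β)) ≤ a ystar - a c)
    (L : Y → Ωs → ℝ) (hmeas : ∀ c, Measurable (L c))
    (hlaw : ∀ c, Measure.map (L c) P = laplaceMeasure (2 * k * r / ε)) :
    ENNReal.ofReal (1 - β)
      ≤ P {ω | ∀ c : Y, c ≠ ystar → a c + L c ω < a ystar + L ystar ω} := by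
  obtain ⟨hβ0, hβ1⟩ := hβ
  set b : ℝ := 2 * k * r / ε
  set N : ℝ := (Fintype.card Y : ℝ)
  have hb : 0 < b := by
    have : (0 : ℝ) < k := by exact_mod_cast hk
    have : (0 : ℝ) < r := by exact_mod_cast hr
    positivity
  have hN : 1 ≤ N := Nat.one_le_cast.mpr (Fintype.card_pos_iff.mpr ⟨ystar⟩)
  set α : ℝ := b * log (N / β)
  have hα : 0 ≤ α := mul_nonneg hb.le (log_nonneg (by rw [le_div_iff₀ hβ0]; linarith))
  have htail : ∀ c, P {ω | α ≤ |L c ω|} ≤ ENNReal.ofReal (β / N) := fun c => by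
    have hexp : exp (-α / b) = β / N := by
      rw [neg_div, mul_div_cancel_left₀ _ hb.ne', exp_neg, exp_log (by positivity), inv_div]
    simpa only [hexp] using measure_abs_ge_le_of_map_eq_laplaceMeasure (hmeas c) (hlaw c) hb hα
  have hmass : (Fintype.card Y : ENNReal) * ENNReal.ofReal (β / N) = ENNReal.ofReal β := by
    rw [← ENNReal.ofReal_natCast, ← ENNReal.ofReal_mul (by positivity),
      mul_div_cancel₀ _ (by positivity)]
  have hgood : (⋃ c, {ω | α ≤ |L c ω|})ᶜ
      ⊆ {ω | ∀ c : Y, c ≠ ystar → a c + L c ω < a ystar + L ystar ω} := by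
    intro ω hω c hc
    simp only [mem_compl_iff, mem_iUnion, mem_ofPred_eq, not_exists, not_le] at hω
    linarith [hGap c hc, (abs_lt.mp (hω c)).2, (abs_lt.mp (hω ystar)).1]
  calc ENNReal.ofReal (1 - β) = 1 - ENNReal.ofReal β := by
        rw [ENNReal.ofReal_sub 1 hβ0.le, ENNReal.ofReal_one]
    _ ≤ P (⋃ c, {ω | α ≤ |L c ω|})ᶜ :=
        hmass ▸ one_sub_card_mul_le_measure_compl_iUnion P htail
    _ ≤ _ := measure_mono hgood

/-- Corollary of Proposition 1 and Remark 1: if the count gap of the true label `y*`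
satisfies `Gap_t ≥ 2α` with `α = (2kr/ε)·log(|Y|/β)`, and independent Laplace noise of
scale `2kr/ε` is added to each coordinate, then with probability at least `1 − β` the
true label `y*` is the unique maximizer of the noisy counts. -/
theorem noisy_hard_label_correct
    {Y : Type*} [Fintype Y] [Nonempty Y] [DecidableEq Y]
    {Ωs : Type*} [MeasurableSpace Ωs] (P : Measure Ωs) [IsProbabilityMeasure P]
    (ε : ℝ) (hε : 0 < ε) (k r : ℕ) (hk : 0 < k) (hr : 0 < r)
    (β : ℝ) (hβ : β ∈ Set.Ioo (0 : ℝ) 1)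
    (a : Y → ℝ) (ystar : Y)
    (hGap : ∀ c : Y, c ≠ ystar →
      2 * ((2 * k * r / ε) * Real.log (Fintype.card Y / β)) ≤ a ystar - a c)
    (L : Y → Ωs → ℝ) (hmeas : ∀ c, Measurable (L c))
    (hlaw : ∀ c, Measure.map (L c) P = laplaceMeasure (2 * k * r / ε))
    (hindep : iIndepFun L P) :
    ENNReal.ofReal (1 - β)
      ≤ P {ω | ∀ c : Y, c ≠ ystar → a c + L c ω < a ystar + L ystar ω} :=
  noisy_hard_label_correct_general P ε hε k r hk hr β hβ a ystar hGap L hmeas hlaw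
end

section
/- (Local differential privacy of the Collision mechanism, probability-ratio form.) Let ε ≥ 0 and let l ≥ c ≥ 1 be integers with c < l, and set Ω = c·exp(ε) + l − c. For any integers m, m' with 0 ≤ m, m' ≤ c and m, m' < l, one has (Ω − exp(ε)·m)/((l − m)·Ω) = 1/Ω · ((c−m)·exp(ε)+l−c)/(l−m) ≥ 1/Ω, every output probability of the Collision mechanism lies in the interval [1/Ω, exp(ε)/Ω], and hence the ratio of any output probability under one input to the same output's probability under any other input is at most exp(ε). In particular the Collision mechanism satisfies local ε-differential privacy. -/
open Real

lemma collision_bounds (ε : ℝ) (hε : 0 ≤ ε) (l c : ℕ) (hc : 1 ≤ c) (hcl : c < l)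
    (m : ℕ) (hmc : m ≤ c) (hml : m < l) :
    1 / (c * Real.exp ε + l - c)
        ≤ ((c * Real.exp ε + l - c) - Real.exp ε * m)
            / ((l - m) * (c * Real.exp ε + l - c))
      ∧ ((c * Real.exp ε + l - c) - Real.exp ε * m)
            / ((l - m) * (c * Real.exp ε + l - c))
          ≤ Real.exp ε / (c * Real.exp ε + l - c) := by
  have hE : (1:ℝ) ≤ Real.exp ε := Real.one_le_exp hε
  have hc' : (1:ℝ) ≤ c := by exact_mod_cast hc
  have hcl' : (c:ℝ) < l := by exact_mod_cast hcl
  have hmc' : (m:ℝ) ≤ c := by exact_mod_cast hmc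
  have hml' : (m:ℝ) < l := by exact_mod_cast hml
  have hΩ : 0 < c * Real.exp ε + l - c := by nlinarith
  have hlm : (0:ℝ) < l - m := by linarith
  constructor
  · rw [div_le_div_iff₀ hΩ (by positivity)]
    nlinarith [mul_le_mul_of_nonneg_left hE (sub_nonneg.mpr hmc'), hΩ.le]
  · rw [div_le_div_iff₀ (by positivity) hΩ]
    nlinarith [mul_le_mul_of_nonneg_left hE (sub_nonneg.mpr hcl'.le), hΩ.le]

/-- Local differential privacy of the Collision mechanism, probability-ratio form:
with `Ω = c·e^ε + l − c`, every output probability (either `e^ε/Ω` for hashed values or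
`(Ω − e^ε·m)/((l−m)·Ω)` for the rest, `0 ≤ m ≤ c`, `m < l`) lies in `[1/Ω, e^ε/Ω]`,
and hence the ratio of any output probability under one input to the same output's
probability under another input is at most `e^ε`: the mechanism is local `ε`-DP. -/
theorem collision_mechanism_local_dp
    (ε : ℝ) (hε : 0 ≤ ε) (l c : ℕ) (hc : 1 ≤ c) (hcl : c < l)
    (m m' : ℕ) (hmc : m ≤ c) (hml : m < l) (hmc' : m' ≤ c) (hml' : m' < l) :
    (1 / (c * Real.exp ε + l - c)
        ≤ ((c * Real.exp ε + l - c) - Real.exp ε * m)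
            / ((l - m) * (c * Real.exp ε + l - c))
      ∧ ((c * Real.exp ε + l - c) - Real.exp ε * m)
            / ((l - m) * (c * Real.exp ε + l - c))
          ≤ Real.exp ε / (c * Real.exp ε + l - c)) ∧
    (∀ p p' : ℝ,
      (p = Real.exp ε / (c * Real.exp ε + l - c) ∨
        p = ((c * Real.exp ε + l - c) - Real.exp ε * m)
              / ((l - m) * (c * Real.exp ε + l - c))) →
      (p' = Real.exp ε / (c * Real.exp ε + l - c) ∨
        p' = ((c * Real.exp ε + l - c) - Real.exp ε * m')
              / ((l - m') * (c * Real.exp ε + l - c))) →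
      p ≤ Real.exp ε * p') := by
  obtain ⟨h1, h2⟩ := collision_bounds ε hε l c hc hcl m hmc hml
  obtain ⟨h1', h2'⟩ := collision_bounds ε hε l c hc hcl m' hmc' hml'
  have hE : (1:ℝ) ≤ Real.exp ε := Real.one_le_exp hε
  have hc' : (1:ℝ) ≤ c := by exact_mod_cast hc
  have hcl' : (c:ℝ) < l := by exact_mod_cast hcl
  have hΩ : 0 < c * Real.exp ε + l - c := by nlinarith
  refine ⟨⟨h1, h2⟩, ?_⟩
  rintro p p' (rfl | rfl) (rfl | rfl)
  · exact le_mul_of_one_le_left (by positivity) hE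
  · calc Real.exp ε / (c * Real.exp ε + l - c)
        = Real.exp ε * (1 / (c * Real.exp ε + l - c)) := by ring
      _ ≤ _ := by exact mul_le_mul_of_nonneg_left h1' (Real.exp_nonneg ε)
  · calc _ ≤ Real.exp ε / (c * Real.exp ε + l - c) := h2
      _ ≤ _ := le_mul_of_one_le_left (by positivity) hE
  · calc _ ≤ Real.exp ε / (c * Real.exp ε + l - c) := h2
      _ = Real.exp ε * (1 / (c * Real.exp ε + l - c)) := by ring
      _ ≤ _ := mul_le_mul_of_nonneg_left h1' (Real.exp_nonneg ε)
end

section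
/- (Marginal success probabilities of the Collision mechanism under a uniform random hash.) Let ε ≥ 0, let G be a finite set, let l ≥ c ≥ 1 be integers with c < l, set Ω = c·exp(ε) + l − c, and let V ⊆ G with |V| = c. Draw H uniformly at random from all functions G → Fin l, and then draw z ∈ Fin l according to the Collision distribution given (V, H). Then for every v ∈ G: if v ∈ V, P[H(v) = z] = exp(ε)/Ω; and if v ∉ V, P[H(v) = z] = 1/l. Consequently the estimator (⟦H(v) = z⟧ − 1/l)/(exp(ε)/Ω − 1/l) is an unbiased estimator of the indicator ⟦v ∈ V⟧ up to the affine rescaling, i.e. its expectation equals 1 if v ∈ V and 0 if v ∉ V. -/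
open MeasureTheory Real Finset

noncomputable def collisionProb {G : Type*} [DecidableEq G] (ε : ℝ) (c l : ℕ)
    (V : Finset G) (h : G → Fin l) (z : Fin l) : ℝ :=
  if z ∈ V.image h then
    Real.exp ε / (c * Real.exp ε + l - c)
  else
    ((c * Real.exp ε + l - c) - Real.exp ε * (V.image h).card)
      / ((l - (V.image h).card) * (c * Real.exp ε + l - c))

/-!
Under a uniform hash, `(H, Z)` has the law `collisionLaw` on `(G → Fin l) × Fin l`, and
`P[H v = Z]` is its mass on the graph of `h ↦ h v`. For `v ∈ V`, the value `h v` always lies in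
`h(V)` and so is output with probability `e^ε/Ω`. For `v ∉ V` the mechanism never looks at `h v`,
so the involution `(h, z) ↦ (update h v z, h v)` of the sample space shows that `l · P[H v = Z]`
is the total mass `1`.

The events `{H = h ∧ Z = z}` are not assumed measurable; since their outer measures add up to
`1`, every event determined by `(H, Z)` is null-measurable with the expected measure, which is
what the expectation of the estimator needs.
-/

section Measure

variable {Ω : Type*} [MeasurableSpace Ω] {μ : Measure Ω}

theorem nullMeasurableSet_of_measure_add_measure_compl_le [IsFiniteMeasure μ] {s : Set Ω}
    (h : μ s + μ sᶜ ≤ μ Set.univ) : NullMeasurableSet s μ := by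
  set t := toMeasurable μ s
  have ht : MeasurableSet t := measurableSet_toMeasurable μ s
  have hst : s ⊆ t := subset_toMeasurable μ s
  have hcompl : μ sᶜ = μ (t \ s) + μ tᶜ := by
    rw [← measure_inter_add_sdiff sᶜ ht, Set.inter_comm, ← Set.sdiff_eq, Set.sdiff_eq sᶜ,
      Set.inter_eq_right.2 (Set.compl_subset_compl.2 hst)]
  have hnull : μ (t \ s) = 0 := by
    refine le_zero_iff.1 ((ENNReal.add_le_add_iff_left (measure_ne_top μ Set.univ)).1 ?_)
    calc μ Set.univ + μ (t \ s) = μ s + μ sᶜ := by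
          rw [hcompl, ← measure_add_measure_compl ht, measure_toMeasurable]; ring
      _ ≤ μ Set.univ + 0 := by rwa [add_zero]
  rw [← Set.sdiff_sdiff_cancel_left hst]
  exact ht.nullMeasurableSet.diff (.of_null hnull)

theorem measure_preimage_le_sum_fiber {α : Type*} (X : Ω → α) (S : Finset α) :
    μ (X ⁻¹' S) ≤ ∑ a ∈ S, μ (X ⁻¹' {a}) := by
  rw [← Set.biUnion_preimage_singleton]
  exact measure_biUnion_finset_le S _

variable [IsProbabilityMeasure μ] {α : Type*} [Fintype α] [DecidableEq α] {X : Ω → α}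

theorem measure_preimage_eq_sum_fiber (hX : ∑ a, μ (X ⁻¹' {a}) = 1) (S : Finset α) :
    μ (X ⁻¹' S) = ∑ a ∈ S, μ (X ⁻¹' {a}) := by
  have hle_compl : μ (X ⁻¹' S)ᶜ ≤ ∑ a ∈ Sᶜ, μ (X ⁻¹' {a}) := by
    simpa [← Set.preimage_compl] using measure_preimage_le_sum_fiber (μ := μ) X Sᶜ
  have hsum : ∑ a ∈ S, μ (X ⁻¹' {a}) + ∑ a ∈ Sᶜ, μ (X ⁻¹' {a}) = 1 := by
    rw [sum_add_sum_compl, hX]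
  have hone : 1 ≤ μ (X ⁻¹' S) + μ (X ⁻¹' S)ᶜ := by
    simpa using measure_union_le (μ := μ) (X ⁻¹' S) (X ⁻¹' S)ᶜ
  have hfin : ∑ a ∈ Sᶜ, μ (X ⁻¹' {a}) ≠ ⊤ :=
    ne_top_of_le_ne_top ENNReal.one_ne_top (hsum ▸ le_add_self)
  refine le_antisymm (measure_preimage_le_sum_fiber X S)
    ((ENNReal.add_le_add_iff_right hfin).1 ?_)
  calc _ = (1 : ENNReal) := hsum
    _ ≤ _ := hone
    _ ≤ _ := by gcongr

theorem nullMeasurableSet_preimage_of_sum_fiber (hX : ∑ a, μ (X ⁻¹' {a}) = 1) (S : Finset α) :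
    NullMeasurableSet (X ⁻¹' S) μ := by
  refine nullMeasurableSet_of_measure_add_measure_compl_le (le_of_eq ?_)
  rw [← Set.preimage_compl, ← coe_compl, measure_preimage_eq_sum_fiber hX,
    measure_preimage_eq_sum_fiber hX, sum_add_sum_compl, hX, measure_univ]

theorem integral_ite_sub_div {p : Ω → Prop} [DecidablePred p]
    (hp : NullMeasurableSet {ω | p ω} μ) (a d : ℝ) :
    ∫ ω, ((if p ω then (1 : ℝ) else 0) - a) / d ∂μ = (μ.real {ω | p ω} - a) / d := by
  have hind : (fun ω => if p ω then (1 : ℝ) else 0) = {ω | p ω}.indicator 1 := by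
    ext ω; simp [Set.indicator_apply]
  have hint : Integrable (fun ω => if p ω then (1 : ℝ) else 0) μ := by
    rw [hind]; exact (integrable_const 1).indicator₀ hp
  rw [integral_div, integral_sub hint (integrable_const a), hind, integral_indicator₀ hp]
  simp

end Measure

theorem card_smul_sum_apply_eq_sum_sum {α β M : Type*} [DecidableEq α] [Fintype α] [Fintype β]
    [AddCommMonoid M] (v : α) (F : (α → β) → β → M)
    (hF : ∀ h t, F (Function.update h v t) = F h) :
    Fintype.card β • ∑ h, F h (h v) = ∑ h, ∑ t, F h t := by
  let σ : Equiv.Perm ((α → β) × β) :=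
    Function.Involutive.toPerm (fun p => (Function.update p.1 v p.2, p.1 v)) (by intro p; simp)
  calc Fintype.card β • ∑ h, F h (h v) = ∑ p : (α → β) × β, F p.1 (p.1 v) := by
        simp [Fintype.sum_prod_type, smul_sum]
    _ = ∑ p, F (σ p).1 ((σ p).1 v) := (Equiv.sum_comp σ _).symm
    _ = ∑ p : (α → β) × β, F (Function.update p.1 v p.2) p.2 := by
        refine sum_congr rfl fun p _ => ?_
        show F (Function.update p.1 v p.2) (Function.update p.1 v p.2 v) = _
        rw [Function.update_self]
    _ = ∑ h, ∑ t, F h t := by simp only [hF, Fintype.sum_prod_type]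

section Collision

variable {G : Type*} {ε : ℝ} {c l : ℕ} {V : Finset G}

theorem card_image_lt_of_card_le (hcl : c < l) (hV : V.card ≤ c) (h : G → Fin l) :
    ((V.image h).card : ℝ) < l := by
  exact_mod_cast (card_image_le.trans hV).trans_lt hcl

theorem collision_normalizer_pos (hcl : c < l) : 0 < (c : ℝ) * exp ε + l - c := by
  have : (c : ℝ) < l := by exact_mod_cast hcl
  have : 0 ≤ (c : ℝ) * exp ε := by positivity
  linarith

theorem one_div_lt_exp_div_collision_normalizer (hcl : c < l) (hε : 0 < ε) :
    1 / (l : ℝ) < exp ε / (c * exp ε + l - c) := by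
  have hΩ := collision_normalizer_pos (ε := ε) hcl
  have hl : (0 : ℝ) < l := by exact_mod_cast (Nat.zero_le c).trans_lt hcl
  have hcl' : (0 : ℝ) < l - c := by rw [sub_pos]; exact_mod_cast hcl
  rw [div_lt_div_iff₀ hl hΩ]
  nlinarith [one_lt_exp_iff.2 hε]

variable [DecidableEq G]

theorem collisionProb_nonneg (hcl : c < l) (hV : V.card ≤ c) (h : G → Fin l) (z : Fin l) :
    0 ≤ collisionProb ε c l V h z := by
  have hΩ := collision_normalizer_pos (ε := ε) hcl
  have hm := card_image_lt_of_card_le hcl hV h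
  have hmc : ((V.image h).card : ℝ) ≤ c := by exact_mod_cast card_image_le.trans hV
  unfold collisionProb
  split_ifs
  · positivity
  · refine div_nonneg ?_ (mul_nonneg (by linarith) hΩ.le)
    have : (c : ℝ) < l := by exact_mod_cast hcl
    nlinarith [mul_nonneg (sub_nonneg.2 hmc) (exp_pos ε).le]

theorem sum_collisionProb (hcl : c < l) (hV : V.card ≤ c) (h : G → Fin l) :
    ∑ z, collisionProb ε c l V h z = 1 := by
  have hΩ := (collision_normalizer_pos (ε := ε) hcl).ne'
  have hm := sub_ne_zero.2 (card_image_lt_of_card_le hcl hV h).ne'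
  have hcard : (((V.image h)ᶜ).card : ℝ) = l - (V.image h).card := by
    rw [card_compl, Fintype.card_fin,
      Nat.cast_sub (card_le_univ _ |>.trans_eq (Fintype.card_fin l))]
  rw [← sum_add_sum_compl (V.image h)]
  simp only [collisionProb]
  rw [sum_congr rfl fun z hz => if_pos hz, sum_congr rfl fun z hz => if_neg (mem_compl.1 hz),
    sum_const, sum_const, nsmul_eq_mul, nsmul_eq_mul, hcard, mul_div_assoc', mul_div_assoc',
    mul_div_mul_left _ _ hm, ← add_div, div_eq_one_iff_eq hΩ]
  ring

theorem collisionProb_update_of_notMem {v : G} (hv : v ∉ V) (h : G → Fin l) (t : Fin l) :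
    collisionProb ε c l V (Function.update h v t) = collisionProb ε c l V h := by
  have : V.image (Function.update h v t) = V.image h :=
    image_congr fun x hx => Function.update_of_ne (ne_of_mem_of_not_mem hx hv) _ _
  ext z; simp only [collisionProb, this]

variable [Fintype G]

noncomputable def collisionLaw (ε : ℝ) (c l : ℕ) (V : Finset G) (s : (G → Fin l) × Fin l) : ℝ :=
  1 / (l : ℝ) ^ Fintype.card G * collisionProb ε c l V s.1 s.2

noncomputable def collisionHitProb (ε : ℝ) (c l : ℕ) (V : Finset G) (v : G) : ℝ :=
  ∑ h : G → Fin l, collisionLaw ε c l V (h, h v)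

theorem collisionLaw_nonneg (hcl : c < l) (hV : V.card ≤ c) (s : (G → Fin l) × Fin l) :
    0 ≤ collisionLaw ε c l V s :=
  mul_nonneg (by positivity) (collisionProb_nonneg hcl hV s.1 s.2)

theorem sum_sum_collisionLaw (hcl : c < l) (hV : V.card ≤ c) :
    ∑ h : G → Fin l, ∑ z, collisionLaw ε c l V (h, z) = 1 := by
  have hl : (l : ℝ) ≠ 0 := by exact_mod_cast (Nat.zero_le c).trans_lt hcl |>.ne'
  simp only [collisionLaw, ← mul_sum, sum_collisionProb hcl hV, mul_one, sum_const, card_univ,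
    Fintype.card_fun, Fintype.card_fin, nsmul_eq_mul, Nat.cast_pow]
  field_simp

theorem collisionHitProb_of_mem (hl : l ≠ 0) {v : G} (hv : v ∈ V) :
    collisionHitProb ε c l V v = exp ε / (c * exp ε + l - c) := by
  have hmem : ∀ h : G → Fin l, h v ∈ V.image h := fun h => mem_image_of_mem h hv
  simp only [collisionHitProb, collisionLaw, collisionProb, hmem, if_true, sum_const, card_univ,
    Fintype.card_fun, Fintype.card_fin, nsmul_eq_mul, Nat.cast_pow]
  field_simp

theorem collisionHitProb_of_notMem (hcl : c < l) (hV : V.card ≤ c) {v : G} (hv : v ∉ V) :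
    collisionHitProb ε c l V v = 1 / l := by
  have hinv : ∀ h t, (fun z => collisionLaw ε c l V (Function.update h v t, z))
      = fun z => collisionLaw ε c l V (h, z) := by
    intro h t
    simp only [collisionLaw, collisionProb_update_of_notMem hv]
  have key := card_smul_sum_apply_eq_sum_sum v (fun h z => collisionLaw ε c l V (h, z)) hinv
  rw [sum_sum_collisionLaw hcl hV, Fintype.card_fin, nsmul_eq_mul] at key
  exact eq_one_div_of_mul_eq_one_right key

theorem collisionHitProb_nonneg (hcl : c < l) (hV : V.card ≤ c) (v : G) :
    0 ≤ collisionHitProb ε c l V v :=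
  sum_nonneg fun h _ => collisionLaw_nonneg hcl hV (h, h v)

end Collision

section RandomHash

variable {G Ω : Type*} [Fintype G] [DecidableEq G] {l : ℕ} {H : Ω → G → Fin l} {Z : Ω → Fin l}

theorem setOf_apply_eq_eq_preimage_graph (v : G) :
    {ω | H ω v = Z ω} = (fun ω => (H ω, Z ω)) ⁻¹' (univ.image fun h : G → Fin l => (h, h v)) := by
  ext ω; simp

variable [MeasurableSpace Ω] {P : Measure Ω} {ε : ℝ} {c : ℕ} {V : Finset G}

theorem sum_measure_preimage_hash_output (hcl : c < l) (hV : V.card ≤ c)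
    (hjoint : ∀ h z, P {ω | H ω = h ∧ Z ω = z} = ENNReal.ofReal (collisionLaw ε c l V (h, z))) :
    ∑ s, P ((fun ω => (H ω, Z ω)) ⁻¹' {s}) = 1 := by
  simp only [Set.preimage, Set.mem_singleton_iff, Prod.ext_iff, Fintype.sum_prod_type, hjoint]
  rw [← ENNReal.ofReal_one, ← sum_sum_collisionLaw (ε := ε) hcl hV,
    ENNReal.ofReal_sum_of_nonneg fun h _ => sum_nonneg fun z _ => collisionLaw_nonneg hcl hV (h, z)]
  simp only [ENNReal.ofReal_sum_of_nonneg fun z _ => collisionLaw_nonneg hcl hV (_, z)]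

variable [IsProbabilityMeasure P]

theorem measure_hash_eq_output (hcl : c < l) (hV : V.card ≤ c)
    (hjoint : ∀ h z, P {ω | H ω = h ∧ Z ω = z} = ENNReal.ofReal (collisionLaw ε c l V (h, z)))
    (v : G) : P {ω | H ω v = Z ω} = ENNReal.ofReal (collisionHitProb ε c l V v) := by
  rw [setOf_apply_eq_eq_preimage_graph,
    measure_preimage_eq_sum_fiber (sum_measure_preimage_hash_output hcl hV hjoint),
    sum_image fun _ _ _ _ h => congrArg Prod.fst h, collisionHitProb, ENNReal.ofReal_sum_of_nonneg fun h _ => collisionLaw_nonneg hcl hV _]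
  simp only [Set.preimage, Set.mem_singleton_iff, Prod.ext_iff, hjoint]

theorem nullMeasurableSet_hash_eq_output (hcl : c < l) (hV : V.card ≤ c)
    (hjoint : ∀ h z, P {ω | H ω = h ∧ Z ω = z} = ENNReal.ofReal (collisionLaw ε c l V (h, z)))
    (v : G) : NullMeasurableSet {ω | H ω v = Z ω} P := by
  rw [setOf_apply_eq_eq_preimage_graph]
  exact nullMeasurableSet_preimage_of_sum_fiber (sum_measure_preimage_hash_output hcl hV hjoint) _

end RandomHash

theorem collision_mechanism_marginals_general
    {G : Type*} [Fintype G] [DecidableEq G]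
    {Ωs : Type*} [MeasurableSpace Ωs] (P : Measure Ωs) [IsProbabilityMeasure P]
    (ε : ℝ) (l c : ℕ) (hcl : c < l)
    (V : Finset G) (hV : V.card = c)
    (H : Ωs → G → Fin l) (Z : Ωs → Fin l)
    (hjoint : ∀ (h : G → Fin l) (z : Fin l),
      P {ω | H ω = h ∧ Z ω = z}
        = ENNReal.ofReal ((1 / (l : ℝ) ^ (Fintype.card G)) * collisionProb ε c l V h z)) :
    (∀ v : G, v ∈ V →
        P {ω | H ω v = Z ω}
          = ENNReal.ofReal (Real.exp ε / (c * Real.exp ε + l - c))) ∧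
    (∀ v : G, v ∉ V → P {ω | H ω v = Z ω} = ENNReal.ofReal (1 / (l : ℝ))) ∧
    (0 < ε → ∀ v : G,
        ∫ ω, ((if H ω v = Z ω then (1 : ℝ) else 0) - 1 / l)
              / (Real.exp ε / (c * Real.exp ε + l - c) - 1 / l) ∂P
          = if v ∈ V then 1 else 0) := by
  have hl : l ≠ 0 := ((Nat.zero_le c).trans_lt hcl).ne'
  have hmarg := measure_hash_eq_output hcl hV.le hjoint
  refine ⟨fun v hv => by rw [hmarg, collisionHitProb_of_mem hl hv],
    fun v hv => by rw [hmarg, collisionHitProb_of_notMem hcl hV.le hv], fun hε v => ?_⟩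
  rw [integral_ite_sub_div (nullMeasurableSet_hash_eq_output hcl hV.le hjoint v), measureReal_def,
    hmarg, ENNReal.toReal_ofReal (collisionHitProb_nonneg hcl hV.le v)]
  split_ifs with hv
  · rw [collisionHitProb_of_mem hl hv]
    exact div_self (sub_ne_zero.2 (one_div_lt_exp_div_collision_normalizer hcl hε).ne')
  · rw [collisionHitProb_of_notMem hcl hV.le hv, sub_self, zero_div]

/-- Marginal success probabilities of the Collision mechanism under a uniformly random
hash: if `H` is uniform over all functions `G → Fin l` and `Z` is drawn from the Collision
distribution given `(V, H)`, then `P[H(v) = Z] = e^ε/Ω` for `v ∈ V` and `P[H(v) = Z] = 1/l`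
for `v ∉ V`; consequently (for `ε > 0`) the rescaled estimator
`(⟦H(v) = Z⟧ − 1/l)/(e^ε/Ω − 1/l)` has expectation `⟦v ∈ V⟧`. -/
theorem collision_mechanism_marginals
    {G : Type*} [Fintype G] [DecidableEq G]
    {Ωs : Type*} [MeasurableSpace Ωs] (P : Measure Ωs) [IsProbabilityMeasure P]
    (ε : ℝ) (hε : 0 ≤ ε) (l c : ℕ) (hc : 1 ≤ c) (hcl : c < l)
    (V : Finset G) (hV : V.card = c)
    (H : Ωs → G → Fin l) (Z : Ωs → Fin l)
    (hjoint : ∀ (h : G → Fin l) (z : Fin l),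
      P {ω | H ω = h ∧ Z ω = z}
        = ENNReal.ofReal ((1 / (l : ℝ) ^ (Fintype.card G)) * collisionProb ε c l V h z)) :
    (∀ v : G, v ∈ V →
        P {ω | H ω v = Z ω}
          = ENNReal.ofReal (Real.exp ε / (c * Real.exp ε + l - c))) ∧
    (∀ v : G, v ∉ V → P {ω | H ω v = Z ω} = ENNReal.ofReal (1 / (l : ℝ))) ∧
    (0 < ε → ∀ v : G,
        ∫ ω, ((if H ω v = Z ω then (1 : ℝ) else 0) - 1 / l)
              / (Real.exp ε / (c * Real.exp ε + l - c) - 1 / l) ∂P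
          = if v ∈ V then 1 else 0) :=
  collision_mechanism_marginals_general P ε l c hcl V hV H Z hjoint
end

section
/- (Randomized response dominates the Laplace mechanism in the local model: variance comparison.) For every real x > 0, exp(x)/(exp(x) − 1)² ≤ 2/x². Equivalently, x²·exp(x) ≤ 2·(exp(x) − 1)². Interpreted for a local privacy budget ε' = x: the variance exp(ε')/(exp(ε') − 1)² of the unbiased randomized-response estimator of a bit is at most the variance 2/ε'² of the Laplace mechanism with scale 1/ε'. -/
open Real

/-! Writing `exp x - 1 = 2 exp (x/2) sinh (x/2)` gives `(exp x - 1)² = 4 exp x · sinh² (x/2)`,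
so the inequality, even without the factor `2`, reduces to `|t| ≤ |sinh t|` at `t = x/2`. -/

namespace Real

theorem sq_le_sinh_sq (x : ℝ) : x ^ 2 ≤ sinh x ^ 2 :=
  sq_le_sq.mpr <| by rw [abs_sinh]; exact self_le_sinh_iff.mpr (abs_nonneg x)

theorem exp_sub_one_eq_two_mul_exp_half_mul_sinh_half (x : ℝ) :
    exp x - 1 = 2 * exp (x / 2) * sinh (x / 2) := by
  have hexp : exp x = exp (x / 2) * exp (x / 2) := by rw [← exp_add, add_halves]
  rw [sinh_eq, exp_neg, hexp]
  field_simp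

theorem sq_mul_exp_le_sq_exp_sub_one (x : ℝ) : x ^ 2 * exp x ≤ (exp x - 1) ^ 2 := by
  have hexp : exp x = exp (x / 2) ^ 2 := by rw [sq, ← exp_add, add_halves]
  calc x ^ 2 * exp x = 4 * exp (x / 2) ^ 2 * (x / 2) ^ 2 := by rw [hexp]; ring
    _ ≤ 4 * exp (x / 2) ^ 2 * sinh (x / 2) ^ 2 :=
      mul_le_mul_of_nonneg_left (sq_le_sinh_sq _) (by positivity)
    _ = (exp x - 1) ^ 2 := by rw [exp_sub_one_eq_two_mul_exp_half_mul_sinh_half]; ring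

theorem exp_div_sq_exp_sub_one_le_inv_sq {x : ℝ} (hx : x ≠ 0) :
    exp x / (exp x - 1) ^ 2 ≤ (x ^ 2)⁻¹ := by
  have hden : exp x - 1 ≠ 0 := sub_ne_zero.mpr ((exp_eq_one_iff x).not.mpr hx)
  rw [← one_div, div_le_div_iff₀ (by positivity) (by positivity), one_mul, mul_comm]
  exact sq_mul_exp_le_sq_exp_sub_one x

end Real

/-- Randomized response dominates the Laplace mechanism in the local model: for every
budget `x > 0`, the variance `exp(x)/(exp(x) − 1)²` of the unbiased randomized-response
estimator is at most the variance `2/x²` of the Laplace mechanism with scale `1/x`;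
equivalently `x²·exp(x) ≤ 2·(exp(x) − 1)²`. -/
theorem rr_variance_le_laplace_variance (x : ℝ) (hx : 0 < x) :
    Real.exp x / (Real.exp x - 1) ^ 2 ≤ 2 / x ^ 2 ∧
    x ^ 2 * Real.exp x ≤ 2 * (Real.exp x - 1) ^ 2 := by
  refine ⟨(exp_div_sq_exp_sub_one_le_inv_sq hx.ne').trans ?_,
    (sq_mul_exp_le_sq_exp_sub_one x).trans ?_⟩
  · rw [inv_eq_one_div]
    gcongr
    norm_num
  · exact le_mul_of_one_le_left (sq_nonneg _) one_le_two
end
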